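/- Let f_1,…,f_k : {0,1} → ℝ≥0 and let g : {0,1}^k → ℝ≥0 be log-supermodular with g(x^1,…,x^k) ≤ ∏_{i=1}^k f_i(z^i(x^1,…,x^k)) for all x^1,…,x^k ∈ {0,1}, and set f(x) = ∏_{i=1}^k f_i(x_i) for x ∈ {0,1}^k. Fix c ∈ {0,…,k}, let V^c = { v ∈ {0,1}^k : v_1 + ⋯ + v_k = c }, and fix T with 1 ≤ T ≤ |V^c|. Then for any T pairwise distinct vectors v^1,…,v^T ∈ V^c there exist T pairwise distinct vectors u^1,…,u^T ∈ V^c such that ∏_{t=1}^T g(v^t) ≤ ∏_{t=1}^T f(u^t). Equivalently, the maximum of ∏_{v∈S} g(v) over T-element subsets S of V^c is at most the maximum of ∏_{v∈S} f(v) over T-element subsets S of V^c. -/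

import Mathlib

/-!
Insert the vectors of `S` one at a time into a chain, bubbling each new vector down the chain by
exchanging pairs `(x, y)` for `(x ⊓ y, x ⊔ y)`. By log-supermodularity this never decreases the
product of `g`, and it preserves the column counts, so `∏_{v ∈ S} g v` is at most the product of
`g` over the chain with the same column counts as `S`. After permuting the coordinates so that the
column counts decrease, every element of that chain is sorted, so `zⁱ` of it is just its `i`-th
coordinate; hence `∏ₜ ∏ᵢ fᵢ (zⁱ (chainₜ))` is the product of `F` over the chain, which equals the
product of `F` over the permuted copy of `S` because `F` has product form and the column counts
agree.
-/

open scoped NNReal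

/-- `zscal x i` is the `(i+1)`-st largest (1-indexed) among the scalars `x 0, …, x (k-1)`;
i.e. it is `true` iff at least `i+1` of these values are `true`. -/
def zscal {k : ℕ} (x : Fin k → Bool) (i : Fin k) : Bool :=
  decide ((i : ℕ) + 1 ≤ (Finset.univ.filter (fun a : Fin k => x a = true)).card)

open Finset

def IsLogSupermodular {α β : Type*} [Lattice α] [Mul β] [LE β] (g : α → β) : Prop :=
  ∀ x y, g x * g y ≤ g (x ⊓ y) * g (x ⊔ y)

section LogSupermodular

variable {α β : Type*} [Lattice α] [CommMonoid β] [PartialOrder β] [IsOrderedMonoid β]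

theorem IsLogSupermodular.mul_prod_range_le {g : α → β} (hg : IsLogSupermodular g)
    {b c : ℕ → α} (hb : ∀ t, b (t + 1) = b t ⊓ c t) (n : ℕ) :
    g (b 0) * ∏ t ∈ range n, g (c t) ≤ g (b n) * ∏ t ∈ range n, g (b t ⊔ c t) := by
  induction n with
  | zero => simp
  | succ n ih =>
    calc g (b 0) * ∏ t ∈ range (n + 1), g (c t)
        = (g (b 0) * ∏ t ∈ range n, g (c t)) * g (c n) := by rw [prod_range_succ, mul_assoc]
      _ ≤ (g (b n) * ∏ t ∈ range n, g (b t ⊔ c t)) * g (c n) := mul_le_mul_left ih _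
      _ = (g (b n) * g (c n)) * ∏ t ∈ range n, g (b t ⊔ c t) := mul_right_comm _ _ _
      _ ≤ (g (b (n + 1)) * g (b n ⊔ c n)) * ∏ t ∈ range n, g (b t ⊔ c t) := by
        rw [hb]; exact mul_le_mul_left (hg _ _) _
      _ = g (b (n + 1)) * ∏ t ∈ range (n + 1), g (b t ⊔ c t) := by
        rw [prod_range_succ, mul_right_comm, mul_assoc]

end LogSupermodular

section OrderStat

variable {ι : Type*}

/-- The `t`-th largest (counting from `t = 0`) element of the chain with the same column counts
as `M`. -/
def orderStat (M : Multiset (ι → Bool)) (t : ℕ) : ι → Bool :=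
  fun i => decide (t < M.countP (fun v => v i = true))

theorem orderStat_cons (a : ι → Bool) (M : Multiset (ι → Bool)) (t : ℕ) :
    orderStat (a ::ₘ M) t =
      (fun i => a i && decide (t ≤ M.countP (fun v => v i = true))) ⊔ orderStat M t := by
  funext i
  simp only [orderStat, Multiset.countP_cons, Pi.sup_apply]
  cases a i <;> simp; omega

theorem orderStat_cons_card (a : ι → Bool) (M : Multiset (ι → Bool)) :
    orderStat (a ::ₘ M) (Multiset.card M) =
      fun i => a i && decide (Multiset.card M ≤ M.countP (fun v => v i = true)) := by
  funext i
  have := M.countP_le_card (fun v => v i = true)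
  simp only [orderStat, Multiset.countP_cons]
  cases a i <;> simp; omega

theorem countP_map_comp {κ : Type*} (M : Multiset (ι → Bool)) (σ : κ → ι) (i : κ) :
    (M.map (· ∘ σ)).countP (fun v => v i = true) = M.countP (fun v => v (σ i) = true) := by
  rw [Multiset.countP_map, Multiset.countP_eq_card_filter]
  rfl

theorem orderStat_map_comp {κ : Type*} (M : Multiset (ι → Bool)) (σ : κ → ι) (t : ℕ) :
    orderStat (M.map (· ∘ σ)) t = orderStat M t ∘ σ := by
  funext i
  simp only [orderStat, Function.comp_apply, countP_map_comp]

theorem antitone_orderStat [Preorder ι] {M : Multiset (ι → Bool)}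
    (hM : Antitone fun i => M.countP (fun v => v i = true)) (t : ℕ) :
    Antitone (orderStat M t) := fun _ _ hij =>
  Bool.le_iff_imp.2 fun ht => decide_eq_true ((of_decide_eq_true ht).trans_le (hM hij))

theorem IsLogSupermodular.prod_map_le_prod_orderStat {β : Type*} [CommMonoid β] [PartialOrder β]
    [IsOrderedMonoid β] {g : (ι → Bool) → β} (hg : IsLogSupermodular g)
    (M : Multiset (ι → Bool)) :
    (M.map g).prod ≤ ∏ t ∈ range (Multiset.card M), g (orderStat M t) := by
  induction M using Multiset.induction_on with
  | empty => simp
  | cons a M ih =>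
    -- `b t` is what is left of `a` after bubbling it past the first `t` elements of the chain
    let b : ℕ → ι → Bool := fun t i => a i && decide (t ≤ M.countP (fun v => v i = true))
    have hb : ∀ t, b (t + 1) = b t ⊓ orderStat M t := by
      intro t; funext i
      simp only [b, orderStat, Pi.inf_apply]
      cases a i <;> simp; omega
    calc (Multiset.map g (a ::ₘ M)).prod = g (b 0) * (M.map g).prod := by simp [b]
      _ ≤ g (b 0) * ∏ t ∈ range (Multiset.card M), g (orderStat M t) := mul_le_mul_right ih _
      _ ≤ g (b (Multiset.card M)) * ∏ t ∈ range (Multiset.card M), g (b t ⊔ orderStat M t) :=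
        hg.mul_prod_range_le hb _
      _ = ∏ t ∈ range (Multiset.card (a ::ₘ M)), g (orderStat (a ::ₘ M) t) := by
        rw [Multiset.card_cons, prod_range_succ, mul_comm, orderStat_cons_card]
        simp only [orderStat_cons, b]

variable {β : Type*} [CommMonoid β]

theorem prod_map_apply_eq_pow_mul_pow (M : Multiset (ι → Bool)) (h : Bool → β) (i : ι) :
    (M.map fun v => h (v i)).prod =
      h true ^ M.countP (fun v => v i = true) *
        h false ^ (Multiset.card M - M.countP (fun v => v i = true)) := by
  induction M using Multiset.induction_on with
  | empty => simp
  | cons a M ih =>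
    have := M.countP_le_card (fun v => v i = true)
    rw [Multiset.map_cons, Multiset.prod_cons, ih, Multiset.countP_cons, Multiset.card_cons]
    cases a i
    · simp [Nat.sub_add_comm this, pow_succ', mul_left_comm]
    · simp [pow_succ, mul_assoc, mul_left_comm]

theorem prod_range_orderStat_apply (M : Multiset (ι → Bool)) (h : Bool → β) (i : ι) :
    ∏ t ∈ range (Multiset.card M), h (orderStat M t i) =
      h true ^ M.countP (fun v => v i = true) *
        h false ^ (Multiset.card M - M.countP (fun v => v i = true)) := by
  rw [← prod_range_mul_prod_Ico _ (M.countP_le_card (fun v => v i = true))]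
  congr 1
  · rw [prod_congr rfl fun t ht => by rw [orderStat, decide_eq_true (mem_range.1 ht)],
      prod_const, card_range]
  · rw [prod_congr rfl fun t ht => by
      rw [orderStat, decide_eq_false (not_lt.2 (mem_Ico.1 ht).1)], prod_const, Nat.card_Ico]

theorem prod_range_orderStat_eq_prod_map [Fintype ι] (M : Multiset (ι → Bool))
    (f : ι → Bool → β) :
    ∏ t ∈ range (Multiset.card M), ∏ i, f i (orderStat M t i) =
      (M.map fun v => ∏ i, f i (v i)).prod := by
  rw [prod_comm, Multiset.prod_map_prod]
  simp only [prod_range_orderStat_apply, prod_map_apply_eq_pow_mul_pow]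

end OrderStat

theorem exists_perm_antitone_comp {α : Type*} [LinearOrder α] {n : ℕ} (d : Fin n → α) :
    ∃ σ : Equiv.Perm (Fin n), Antitone (d ∘ σ) :=
  ⟨Fin.revPerm.trans (Tuple.sort d), fun _ _ hij => Tuple.monotone_sort d (Fin.rev_le_rev.2 hij)⟩

theorem card_filter_comp_perm {ι : Type*} [Fintype ι] (x : ι → Bool) (σ : Equiv.Perm ι) :
    #{i | x (σ i) = true} = #{i | x i = true} :=
  card_equiv σ (by simp)

theorem zscal_eq_comp_of_antitone {k : ℕ} {x : Fin k → Bool} {σ : Equiv.Perm (Fin k)}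
    (h : Antitone (x ∘ σ)) : zscal x = x ∘ σ := by
  funext j
  have := Fin.lt_card_filter_univ_iff_apply_of_imp (j := j) (fun i => x (σ i) = true)
    fun i j hji hi => Bool.eq_true_of_true_le (hi ▸ h hji)
  rw [card_filter_comp_perm] at this
  exact Bool.eq_iff_iff.2 (decide_eq_true_iff.trans this)

theorem exists_layer_subset_prod_le_general {k : ℕ}
    (f : Fin k → Bool → ℝ≥0) (g : (Fin k → Bool) → ℝ≥0)
    (hg : ∀ x y : Fin k → Bool, g x * g y ≤ g (x ⊓ y) * g (x ⊔ y))
    (hgf : ∀ x : Fin k → Bool, g x ≤ ∏ i : Fin k, f i (zscal x i))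
    (F : (Fin k → Bool) → ℝ≥0)
    (hF : ∀ x : Fin k → Bool, F x = ∏ i : Fin k, f i (x i))
    (c : ℕ)
    (Vc : Finset (Fin k → Bool))
    (hVc : Vc = Finset.univ.filter
      (fun v : Fin k → Bool => (Finset.univ.filter (fun i : Fin k => v i = true)).card = c))
    (T : ℕ)
    (S : Finset (Fin k → Bool)) (hS : S ⊆ Vc) (hScard : S.card = T) :
    ∃ S' : Finset (Fin k → Bool), S' ⊆ Vc ∧ S'.card = T ∧ ∏ v ∈ S, g v ≤ ∏ v ∈ S', F v := by
  obtain ⟨σ, hσ⟩ :=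
    exists_perm_antitone_comp fun i => S.val.countP (fun v : Fin k → Bool => v i = true)
  let e : (Fin k → Bool) ↪ (Fin k → Bool) := ⟨(· ∘ σ), σ.surjective.injective_comp_right⟩
  have hsorted (t : ℕ) : zscal (orderStat S.val t) = orderStat (S.val.map (· ∘ σ)) t := by
    rw [orderStat_map_comp]
    refine zscal_eq_comp_of_antitone ?_
    rw [← orderStat_map_comp]
    exact antitone_orderStat (by simp only [countP_map_comp]; exact hσ) t
  refine ⟨S.map e, ?_, by rw [card_map, hScard], ?_⟩
  · intro u hu
    obtain ⟨v, hv, rfl⟩ := mem_map.1 hu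
    have hv := hS hv
    simp only [hVc, mem_filter, mem_univ, true_and] at hv ⊢
    exact (card_filter_comp_perm v σ).trans hv
  calc ∏ v ∈ S, g v ≤ ∏ t ∈ range T, g (orderStat S.val t) :=
        hScard ▸ IsLogSupermodular.prod_map_le_prod_orderStat hg S.val
    _ ≤ ∏ t ∈ range T, ∏ i, f i (zscal (orderStat S.val t) i) := prod_le_prod' fun t _ => hgf _
    _ = ∏ t ∈ range (Multiset.card (S.val.map (· ∘ σ))),
          ∏ i, f i (orderStat (S.val.map (· ∘ σ)) t i) := by
        simp only [hsorted, Multiset.card_map, card_val, hScard]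
    _ = ∏ v ∈ S.map e, F v := by
        rw [prod_range_orderStat_eq_prod_map, prod_eq_multiset_prod, map_val]
        simp only [hF]
        rfl

/-- The key step in Lemma 5 of the paper: with `g : {0,1}ᵏ → ℝ≥0` log-supermodular,
`g ≤ ∏ᵢ fᵢ ∘ zⁱ`, and `f(x) = ∏ᵢ fᵢ(xᵢ)`, for every `c ∈ {0,…,k}` and every `T`-element
set `S` of vectors in the layer `V^c = {v : v₁+⋯+v_k = c}` (with `1 ≤ T ≤ |V^c|`) there is a
`T`-element subset `S'` of `V^c` with `∏_{v∈S} g(v) ≤ ∏_{v∈S'} f(v)`. -/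
theorem exists_layer_subset_prod_le {k : ℕ}
    (f : Fin k → Bool → ℝ≥0) (g : (Fin k → Bool) → ℝ≥0)
    (hg : ∀ x y : Fin k → Bool, g x * g y ≤ g (x ⊓ y) * g (x ⊔ y))
    (hgf : ∀ x : Fin k → Bool, g x ≤ ∏ i : Fin k, f i (zscal x i))
    (F : (Fin k → Bool) → ℝ≥0)
    (hF : ∀ x : Fin k → Bool, F x = ∏ i : Fin k, f i (x i))
    (c : ℕ) (hc : c ≤ k)
    (Vc : Finset (Fin k → Bool))
    (hVc : Vc = Finset.univ.filter
      (fun v : Fin k → Bool => (Finset.univ.filter (fun i : Fin k => v i = true)).card = c))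
    (T : ℕ) (hT1 : 1 ≤ T) (hT : T ≤ Vc.card)
    (S : Finset (Fin k → Bool)) (hS : S ⊆ Vc) (hScard : S.card = T) :
    ∃ S' : Finset (Fin k → Bool), S' ⊆ Vc ∧ S'.card = T ∧ ∏ v ∈ S, g v ≤ ∏ v ∈ S', F v :=
  exists_layer_subset_prod_le_general f g hg hgf F hF c Vc hVc T S hS hScard
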